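/- Let d ≤ min(m, n), A ∈ ℝ^(m×d), B ∈ ℝ^(d×n) with rank(A) = rank(B) = d, and let f : ℝ^(m×n) → ℝ be differentiable. Suppose for every pair (D_A, D_B) of sufficiently small perturbations, f((A+D_A)(B+D_B)) ≥ f(AB) whenever the perturbations arise from single-layer perturbations in a deep factorization A = M_k⋯M_{j+1}, B = M_j⋯M₁. Then (A, B) is a local minimum of L₂(X,Y) = f(XY). -/
import Mathlib


attribute [local instance] Matrix.frobeniusNormedAddCommGroup Matrix.frobeniusNormedSpace

/-- Product `M (b-1) * ⋯ * M a` of a chain of matrices (identity when `b = a`,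
junk value `0` when `b < a`). -/
def chainProd (d : ℕ → ℕ) (M : ∀ i : ℕ, Matrix (Fin (d (i + 1))) (Fin (d i)) ℝ)
    (a : ℕ) : (b : ℕ) → Matrix (Fin (d b)) (Fin (d a)) ℝ
  | 0 => if h : 0 = a then by rw [← h]; exact 1 else 0
  | (b + 1) => if h : b + 1 = a then by rw [← h]; exact 1
      else M b * chainProd d M a b

/-- Extend a `Fin k`-indexed tuple of layer matrices to an `ℕ`-indexed one (by `0`). -/
def ext (d : ℕ → ℕ) (k : ℕ)
    (N : ∀ i : Fin k, Matrix (Fin (d (i.1 + 1))) (Fin (d i.1)) ℝ) :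
    ∀ i : ℕ, Matrix (Fin (d (i + 1))) (Fin (d i)) ℝ :=
  fun i => if h : i < k then N ⟨i, h⟩ else 0
lemma chainProd_self (d : ℕ → ℕ) (M : ∀ i : ℕ, Matrix (Fin (d (i + 1))) (Fin (d i)) ℝ)
    (a : ℕ) : chainProd d M a a = 1 := by
  cases a <;> simp [chainProd]

lemma chainProd_succ (d : ℕ → ℕ) (M : ∀ i : ℕ, Matrix (Fin (d (i + 1))) (Fin (d i)) ℝ)
    {a b : ℕ} (h : a ≤ b) : chainProd d M a (b + 1) = M b * chainProd d M a b := by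
  rw [chainProd, dif_neg (by omega)]

lemma chainProd_zero (d : ℕ → ℕ) (M : ∀ i : ℕ, Matrix (Fin (d (i + 1))) (Fin (d i)) ℝ)
    {a b : ℕ} (h : b < a) : chainProd d M a b = 0 := by
  induction b with
  | zero => rw [chainProd, dif_neg (by omega)]
  | succ b ih =>
    rw [chainProd, dif_neg (by omega), ih (by omega), Matrix.mul_zero]

lemma chainProd_congr (d : ℕ → ℕ) (M N : ∀ i : ℕ, Matrix (Fin (d (i + 1))) (Fin (d i)) ℝ)
    {a b : ℕ} (h : ∀ i, a ≤ i → i < b → M i = N i) :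
    chainProd d M a b = chainProd d N a b := by
  induction b with
  | zero => rfl
  | succ b ih =>
    by_cases hba : b + 1 = a
    · simp only [chainProd, dif_pos hba]
    · simp only [chainProd, dif_neg hba]
      by_cases hab : a ≤ b
      · rw [h b (by omega) (by omega), ih (fun i hi hib => h i hi (by omega))]
      · rw [chainProd_zero d M (by omega), chainProd_zero d N (by omega),
          Matrix.mul_zero, Matrix.mul_zero]

lemma chainProd_split (d : ℕ → ℕ) (M : ∀ i : ℕ, Matrix (Fin (d (i + 1))) (Fin (d i)) ℝ)
    {a b c : ℕ} (hab : a ≤ b) (hbc : b ≤ c) :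
    chainProd d M a c = chainProd d M b c * chainProd d M a b := by
  induction c, hbc using Nat.le_induction with
  | base => rw [chainProd_self, Matrix.one_mul]
  | succ c hc ih =>
    rw [chainProd_succ d M (le_trans hab hc), chainProd_succ d M hc, ih, Matrix.mul_assoc]

open Matrix in
lemma isUnit_of_rank_eq {q : ℕ} (S : Matrix (Fin q) (Fin q) ℝ) (h : S.rank = q) :
    IsUnit S := by
  rw [← Matrix.mulVec_surjective_iff_isUnit]
  have ht : LinearMap.range S.mulVecLin = ⊤ := by
    apply Submodule.eq_top_of_finrank_eq
    rw [← Matrix.rank, h, Module.finrank_fintype_fun_eq_card, Fintype.card_fin]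
  intro v
  exact (LinearMap.range_eq_top.mp ht) v

open Matrix in
lemma exists_left_inv {p q : ℕ} (A : Matrix (Fin p) (Fin q) ℝ) (h : A.rank = q) :
    ∃ L : Matrix (Fin q) (Fin p) ℝ, L * A = 1 := by
  have hu : IsUnit (Aᵀ * A) := isUnit_of_rank_eq _ (by rw [Matrix.rank_transpose_mul_self, h])
  refine ⟨(Aᵀ * A)⁻¹ * Aᵀ, ?_⟩
  rw [Matrix.mul_assoc, Matrix.nonsing_inv_mul _ ((Matrix.isUnit_iff_isUnit_det _).mp hu)]

open Matrix in
lemma exists_right_inv {p q : ℕ} (A : Matrix (Fin p) (Fin q) ℝ) (h : A.rank = p) :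
    ∃ R : Matrix (Fin q) (Fin p) ℝ, A * R = 1 := by
  have hu : IsUnit (A * Aᵀ) := isUnit_of_rank_eq _ (by rw [Matrix.rank_self_mul_transpose, h])
  refine ⟨Aᵀ * (A * Aᵀ)⁻¹, ?_⟩
  rw [← Matrix.mul_assoc, Matrix.mul_nonsing_inv _ ((Matrix.isUnit_iff_isUnit_det _).mp hu)]

/-- if `A = M_k ⋯ M_{j+1}` and `B = M_j ⋯ M_1` both have full rank
`d j`, then local minimality of `L_k` at `(M₁, …, M_k)` transfers to local
minimality of `L₂(X, Y) = f (X Y)` at `(A, B)`. -/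
theorem stmt_19 (d : ℕ → ℕ) (k : ℕ) (hk : 2 ≤ k)
    (f : Matrix (Fin (d k)) (Fin (d 0)) ℝ → ℝ) (hdiff : Differentiable ℝ f)
    (j : ℕ) (hj0 : 0 < j) (hjk : j < k) (hmin : ∀ i ≤ k, d j ≤ d i)
    (hdm : d j ≤ d k) (hdn : d j ≤ d 0)
    (M : ∀ i : Fin k, Matrix (Fin (d (i.1 + 1))) (Fin (d i.1)) ℝ)
    (hrA : (chainProd d (ext d k M) j k).rank = d j)
    (hrB : (chainProd d (ext d k M) 0 j).rank = d j)
    (hloc : IsLocalMin (fun N => f (chainProd d (ext d k N) 0 k)) M) :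
    IsLocalMin (fun p : Matrix (Fin (d k)) (Fin (d j)) ℝ × Matrix (Fin (d j)) (Fin (d 0)) ℝ =>
        f (p.1 * p.2))
      (chainProd d (ext d k M) j k, chainProd d (ext d k M) 0 j) := by
  obtain ⟨k', rfl⟩ : ∃ k', k = k' + 1 := ⟨k - 1, by omega⟩
  have hjk' : j ≤ k' := by omega
  have hk1 : 1 ≤ k' := by omega
  set E := ext d (k' + 1) M with hE
  set A := chainProd d E j (k' + 1) with hA
  set B := chainProd d E 0 j with hB
  set A₁ := chainProd d E j k' with hA1
  set C := chainProd d E 1 j with hC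
  have hE0 : E 0 = M ⟨0, by omega⟩ := by
    simp only [hE, ext]; rw [dif_pos (by omega)]
  have hEk : E k' = M ⟨k', by omega⟩ := by
    simp only [hE, ext]; rw [dif_pos (by omega)]
  have hAsp : A = E k' * A₁ := chainProd_succ d E hjk'
  have hBsp : B = C * E 0 := by
    rw [hB, chainProd_split d E (Nat.zero_le 1) hj0, chainProd_succ d E (le_refl 0),
      chainProd_self, Matrix.mul_one]
  have hrA1 : A₁.rank = d j := by
    refine le_antisymm (le_trans A₁.rank_le_card_width (by simp)) ?_
    calc d j = A.rank := hrA.symm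
      _ ≤ A₁.rank := by rw [hAsp]; exact Matrix.rank_mul_le_right _ _
  have hrC : C.rank = d j := by
    refine le_antisymm (le_trans C.rank_le_card_height (by simp)) ?_
    calc d j = B.rank := hrB.symm
      _ ≤ C.rank := by rw [hBsp]; exact Matrix.rank_mul_le_left _ _
  obtain ⟨L, hL⟩ := exists_left_inv A₁ hrA1
  obtain ⟨R, hR⟩ := exists_right_inv C hrC
  set Φ : (Matrix (Fin (d (k' + 1))) (Fin (d j)) ℝ × Matrix (Fin (d j)) (Fin (d 0)) ℝ) →
      (∀ i : Fin (k' + 1), Matrix (Fin (d (i.1 + 1))) (Fin (d i.1)) ℝ) := fun p =>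
    Function.update (Function.update M ⟨0, by omega⟩ (M ⟨0, by omega⟩ + R * (p.2 - B)))
      ⟨k', by omega⟩ (M ⟨k', by omega⟩ + (p.1 - A) * L) with hΦ
  have hne : (⟨0, by omega⟩ : Fin (k' + 1)) ≠ ⟨k', by omega⟩ := by
    simp only [ne_eq, Fin.mk.injEq]; omega
  have eF0 : ∀ p, ext d (k' + 1) (Φ p) 0 = M ⟨0, by omega⟩ + R * (p.2 - B) := by
    intro p
    simp only [hΦ, ext]
    rw [dif_pos (by omega), Function.update_of_ne hne, Function.update_self]
  have eFk : ∀ p, ext d (k' + 1) (Φ p) k' = M ⟨k', by omega⟩ + (p.1 - A) * L := by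
    intro p
    simp only [hΦ, ext]
    rw [dif_pos (by omega), Function.update_self]
  have hmid : ∀ p, ∀ i, 1 ≤ i → i < k' → ext d (k' + 1) (Φ p) i = E i := by
    intro p i h1i hik
    simp only [hΦ, hE, ext]
    rw [dif_pos (by omega), dif_pos (by omega),
      Function.update_of_ne (by simp only [ne_eq, Fin.mk.injEq]; omega),
      Function.update_of_ne (by simp only [ne_eq, Fin.mk.injEq]; omega)]
  have key : ∀ p : Matrix (Fin (d (k' + 1))) (Fin (d j)) ℝ × Matrix (Fin (d j)) (Fin (d 0)) ℝ,
      chainProd d (ext d (k' + 1) (Φ p)) 0 (k' + 1) = p.1 * p.2 := by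
    intro p
    have e1 : chainProd d (ext d (k' + 1) (Φ p)) j k' = A₁ :=
      chainProd_congr d _ E (fun i hji hik => hmid p i (by omega) hik)
    have e2 : chainProd d (ext d (k' + 1) (Φ p)) 1 j = C :=
      chainProd_congr d _ E (fun i h1 hij => hmid p i h1 (by omega))
    have hinner : C * (M ⟨0, by omega⟩ + R * (p.2 - B)) = p.2 := by
      rw [Matrix.mul_add, ← Matrix.mul_assoc, hR, Matrix.one_mul, ← hE0, ← hBsp]
      abel
    have houter : (M ⟨k', by omega⟩ + (p.1 - A) * L) * A₁ = p.1 := by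
      rw [Matrix.add_mul, Matrix.mul_assoc, hL, Matrix.mul_one, ← hEk, ← hAsp]
      abel
    rw [chainProd_succ d _ (Nat.zero_le k'),
      chainProd_split d _ (Nat.zero_le j) hjk', e1,
      chainProd_split d _ (Nat.zero_le 1) hj0, e2,
      chainProd_succ d _ (le_refl 0), chainProd_self, Matrix.mul_one,
      eF0, eFk, hinner, ← Matrix.mul_assoc, houter]
  have hΦpt : Φ (A, B) = M := by
    funext i
    simp only [hΦ, sub_self, Matrix.mul_zero, Matrix.zero_mul, add_zero,
      Function.update_eq_self]
  have hΦcont : ContinuousAt Φ (A, B) := by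
    apply Continuous.continuousAt
    apply continuous_pi
    intro i
    by_cases h1 : i = ⟨k', by omega⟩
    · subst h1
      simp only [hΦ, Function.update_self]
      exact continuous_const.add ((continuous_fst.sub continuous_const).matrix_mul
        continuous_const)
    · by_cases h0 : i = ⟨0, by omega⟩
      · subst h0
        simp only [hΦ, Function.update_of_ne h1, Function.update_self]
        exact continuous_const.add (continuous_const.matrix_mul
          (continuous_snd.sub continuous_const))
      · simp only [hΦ, Function.update_of_ne h1, Function.update_of_ne h0]
        exact continuous_const
  rw [← hΦpt] at hloc
  have h2 := hΦcont.eventually hloc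
  have hAB : chainProd d (ext d (k' + 1) (Φ (A, B))) 0 (k' + 1) = A * B := key (A, B)
  refine Filter.Eventually.mono h2 ?_
  intro p hp
  simpa only [hAB, key p] using hp
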